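/- arXiv:cs/0208004 — 4 statements merged into one kernel-verified Lean document; each statement's English description precedes it below -/
import Mathlib

section
/- Let C be a finite sequence of nodes each with cost +1 or -1. Then the hump decomposition of C contains O(√|C|) humps; more precisely, if the decomposition has n₁ N-humps (negative cost) and n₂ P-humps (nonnegative cost), then |C| ≥ n₁(n₁+1)/2 + n₂(n₂+1)/2, hence n₁ + n₂ ≤ 2√(2|C|). -/
/-!
Every ±1-sequence `L` satisfies `height L + fall L ≤ |L|`: the height is reached by a prefix,
whose sum is at most its length, and the fall is minus the sum of the remaining suffix.
The heights of the N-humps are distinct nonnegative integers, so the `i`-th N-hump has height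
at least `i` and hence length at least `i + 1`; the same holds for the falls of the P-humps,
read from right to left. Summing gives `|C| ≥ n₁(n₁+1)/2 + n₂(n₂+1)/2`, and
`(n₁ + n₂)² ≤ 2(n₁² + n₂²) ≤ 4|C|`.
-/

def cost (L : List ℤ) : ℤ := L.sum

def height (L : List ℤ) : ℤ :=
  ((List.range (L.length + 1)).map fun k => (L.take k).sum).foldr max 0

def fall (L : List ℤ) : ℤ := height L - cost L

/-- `H` is a hump: it has a useful peak at index `k`. -/
def IsHump (H : List ℤ) : Prop :=
  H ≠ [] ∧ ∃ k < H.length,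
    (∀ m < H.length, (H.take (m + 1)).sum ≤ (H.take (k + 1)).sum) ∧
    (∀ m < k, 0 ≤ (H.take (m + 1)).sum) ∧
    (∀ m, k < m → m < H.length → cost H ≤ (H.take (m + 1)).sum)

/-- The monotonicity property of a hump decomposition: for `H₁` preceding `H₂`,
N-humps come first, N-humps have strictly increasing heights, P-humps strictly
decreasing reverse heights. -/
def StdMono (H₁ H₂ : List ℤ) : Prop :=
  (0 ≤ cost H₁ → 0 ≤ cost H₂ ∧ fall H₂ < fall H₁) ∧
  (cost H₂ < 0 → cost H₁ < 0 ∧ height H₁ < height H₂)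

theorem List.foldr_max_mem_cons {α : Type*} [LinearOrder α] (b : α) (l : List α) :
    l.foldr max b ∈ b :: l := by
  induction l with
  | nil => exact List.mem_singleton_self b
  | cons a t ih =>
    rcases max_choice a (t.foldr max b) with h | h <;>
      simp only [List.foldr_cons, h, List.mem_cons] at ih ⊢ <;> tauto

theorem List.Pairwise.length_mul_succ_le_two_mul_sum {α : Type*} {l : List α} {f : α → ℤ}
    {g : α → ℕ} (hmono : l.Pairwise fun a b => f a < f b) (hf : ∀ a ∈ l, 0 ≤ f a)
    (hfg : ∀ a ∈ l, f a + 1 ≤ g a) :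
    l.length * (l.length + 1) ≤ 2 * (l.map g).sum := by
  suffices key : ∀ c : ℤ, (∀ a ∈ l, c ≤ f a) →
      (l.length : ℤ) * (l.length + 1 + 2 * c) ≤ 2 * (l.map g).sum by
    exact_mod_cast key 0 hf
  clear hf
  induction l with
  | nil => simp
  | cons a t ih =>
    intro c hc
    obtain ⟨hlt, ht⟩ := List.pairwise_cons.1 hmono
    have hca : c ≤ f a := hc a List.mem_cons_self
    have hga : f a + 1 ≤ g a := hfg a List.mem_cons_self
    have htail := ih ht (fun b hb => hfg b (List.mem_cons_of_mem a hb)) (c + 1)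
      (fun b hb => by linarith [hlt b hb])
    simp only [List.length_cons, List.map_cons, List.sum_cons]
    push_cast at htail ⊢
    nlinarith

theorem sum_take_le_height (L : List ℤ) {k : ℕ} (hk : k ≤ L.length) :
    (L.take k).sum ≤ height L :=
  List.le_max_of_le' 0 (List.mem_map.2 ⟨k, List.mem_range.2 (by omega), rfl⟩) le_rfl

theorem height_nonneg (L : List ℤ) : 0 ≤ height L := by
  simpa using sum_take_le_height L (Nat.zero_le _)

theorem cost_le_height (L : List ℤ) : cost L ≤ height L := by
  simpa [cost] using sum_take_le_height L le_rfl

theorem exists_height_eq_sum_take (L : List ℤ) :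
    ∃ k ≤ L.length, height L = (L.take k).sum := by
  rcases List.mem_cons.1 (List.foldr_max_mem_cons 0
    ((List.range (L.length + 1)).map fun k => (L.take k).sum)) with h | h
  · exact ⟨0, Nat.zero_le _, by simpa [height] using h⟩
  · obtain ⟨k, hk, hsum⟩ := List.mem_map.1 h
    exact ⟨k, by simpa [Nat.lt_succ_iff] using hk, hsum.symm⟩

theorem height_add_fall_le_length {L : List ℤ} (hL : ∀ x ∈ L, |x| ≤ 1) :
    height L + fall L ≤ L.length := by
  obtain ⟨k, hk, hheight⟩ := exists_height_eq_sum_take L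
  have hpre : (L.take k).sum ≤ (L.take k).length := by
    simpa using List.sum_le_card_nsmul _ 1 fun x hx =>
      (abs_le.1 (hL x (List.mem_of_mem_take hx))).2
  have hsuf : -((L.drop k).length : ℤ) ≤ (L.drop k).sum := by
    simpa using List.card_nsmul_le_sum _ (-1) fun x hx =>
      (abs_le.1 (hL x (List.mem_of_mem_drop hx))).1
  have hcost : cost L = (L.take k).sum + (L.drop k).sum := by
    rw [cost, ← List.sum_append, List.take_append_drop]
  simp only [List.length_take, List.length_drop, min_eq_left hk] at hpre hsuf
  rw [fall, hcost, hheight]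
  omega

theorem height_add_one_le_length_of_cost_neg {L : List ℤ} (hL : ∀ x ∈ L, |x| ≤ 1)
    (hcost : cost L < 0) : height L + 1 ≤ L.length := by
  have := height_add_fall_le_length hL
  have := height_nonneg L
  unfold fall at *
  omega

theorem fall_add_one_le_length_of_cost_nonneg {L : List ℤ} (hL : ∀ x ∈ L, |x| ≤ 1)
    (hne : L ≠ []) (hcost : 0 ≤ cost L) : fall L + 1 ≤ L.length := by
  have := height_add_fall_le_length hL
  have := cost_le_height L
  have : 1 ≤ L.length := List.length_pos_iff.2 hne
  unfold fall at *
  omega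

theorem length_mul_succ_le_two_mul_sum_length_filter_cost_neg {D : List (List ℤ)}
    (hD : ∀ H ∈ D, ∀ x ∈ H, |x| ≤ 1) (hmono : D.Pairwise StdMono) :
    (D.filter fun H => cost H < 0).length * ((D.filter fun H => cost H < 0).length + 1) ≤
      2 * ((D.filter fun H => cost H < 0).map List.length).sum := by
  have hmem : ∀ H ∈ D.filter fun H => cost H < 0, H ∈ D ∧ cost H < 0 := by simp
  have hheight :
      (D.filter fun H => cost H < 0).Pairwise fun H₁ H₂ => height H₁ < height H₂ :=
    (hmono.filter _).imp_of_mem fun _ hH₂ h => (h.2 (hmem _ hH₂).2).2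
  exact hheight.length_mul_succ_le_two_mul_sum (fun H _ => height_nonneg H)
    fun H hH => height_add_one_le_length_of_cost_neg (hD H (hmem H hH).1) (hmem H hH).2

theorem length_mul_succ_le_two_mul_sum_length_filter_cost_nonneg {D : List (List ℤ)}
    (hD : ∀ H ∈ D, ∀ x ∈ H, |x| ≤ 1) (hne : ∀ H ∈ D, H ≠ [])
    (hmono : D.Pairwise StdMono) :
    (D.filter fun H => 0 ≤ cost H).length * ((D.filter fun H => 0 ≤ cost H).length + 1) ≤
      2 * ((D.filter fun H => 0 ≤ cost H).map List.length).sum := by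
  have hmem : ∀ H ∈ (D.filter fun H => 0 ≤ cost H).reverse, H ∈ D ∧ 0 ≤ cost H := by
    simp
  have hfall :
      (D.filter fun H => 0 ≤ cost H).reverse.Pairwise fun H₁ H₂ => fall H₁ < fall H₂ :=
    List.pairwise_reverse.2 <| (hmono.filter _).imp_of_mem fun hH₁ _ h =>
      (h.1 (hmem _ (List.mem_reverse.2 hH₁)).2).2
  simpa using hfall.length_mul_succ_le_two_mul_sum
    (fun H _ => by simpa [fall] using cost_le_height H)
    fun H hH => fall_add_one_le_length_of_cost_nonneg (hD H (hmem H hH).1)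
      (hne H (hmem H hH).1) (hmem H hH).2

theorem add_le_two_mul_sqrt_of_triangular_le {a b c : ℕ}
    (h : a * (a + 1) + b * (b + 1) ≤ 2 * c) : (a + b : ℝ) ≤ 2 * Real.sqrt (2 * c) := by
  have hsq : ((a + b : ℝ) / 2) ^ 2 ≤ 2 * c := by
    have : (a * (a + 1) + b * (b + 1) : ℝ) ≤ 2 * c := by exact_mod_cast h
    nlinarith [sq_nonneg ((a : ℝ) - b)]
  have := Real.le_sqrt_of_sq_le hsq
  linarith

theorem num_humps_le_sqrt (C : List ℤ) (hC : ∀ x ∈ C, x = 1 ∨ x = -1)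
    (D : List (List ℤ)) (hjoin : D.flatten = C)
    (hhump : ∀ H ∈ D, IsHump H)
    (hmono : D.Pairwise StdMono)
    (n₁ n₂ : ℕ)
    (hn₁ : n₁ = (D.filter fun H => decide (cost H < 0)).length)
    (hn₂ : n₂ = (D.filter fun H => decide (0 ≤ cost H)).length) :
    n₁ * (n₁ + 1) / 2 + n₂ * (n₂ + 1) / 2 ≤ C.length ∧
    (n₁ + n₂ : ℝ) ≤ 2 * Real.sqrt (2 * C.length) := by
  have hD : ∀ H ∈ D, ∀ x ∈ H, |x| ≤ 1 := fun H hH x hx => by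
    rcases hC x (hjoin ▸ List.mem_flatten.2 ⟨H, hH, hx⟩) with rfl | rfl <;> norm_num
  have hN := length_mul_succ_le_two_mul_sum_length_filter_cost_neg hD hmono
  have hP := length_mul_succ_le_two_mul_sum_length_filter_cost_nonneg hD
    (fun H hH => (hhump H hH).1) hmono
  rw [← hn₁] at hN
  rw [← hn₂] at hP
  have hsplit : ((D.filter fun H => cost H < 0).map List.length).sum +
      ((D.filter fun H => 0 ≤ cost H).map List.length).sum = C.length := by
    rw [← hjoin, List.length_flatten,
      ← List.sum_map_filter_add_sum_map_filter_not (fun H => cost H < 0) List.length D]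
    simp only [not_lt]
  constructor
  · have := Nat.div_le_of_le_mul hN
    have := Nat.div_le_of_le_mul hP
    omega
  · exact add_le_two_mul_sqrt_of_triangular_le (by omega)
end

section
/- For any finite sequences of nodes S₁, A, B, S₂ with integer costs, if the concatenation BA is in standard order (i.e., cost(B) < 0 and cost(A) < 0 with height(B) ≤ height(A), or cost(B) ≥ 0 and cost(A) ≥ 0 with fall(B) ≥ fall(A), or cost(B) < 0 ≤ cost(A)), then height(S₁ B A S₂) ≤ height(S₁ A B S₂). -/
/-- `StandardPair B A` : the series `B A` (with `B` first) is in standard order. -/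
def StandardPair (B A : List ℤ) : Prop :=
  (cost B < 0 ∧ cost A < 0 ∧ height B ≤ height A) ∨
  (0 ≤ cost B ∧ 0 ≤ cost A ∧ fall A ≤ fall B) ∨
  (cost B < 0 ∧ 0 ≤ cost A)

def height2 : List ℤ → ℤ
  | [] => 0
  | a :: L => max 0 (a + height2 L)

lemma aux_max (a : ℤ) (t : List ℤ) :
    max 0 (max a ((t.map (a + ·)).foldr max 0)) = max 0 (a + max 0 (t.foldr max 0)) := by
  induction t with
  | nil => simp; omega
  | cons x t ih => simp only [List.map_cons, List.foldr_cons] at *; omega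

lemma height_eq (L : List ℤ) : height L = height2 L := by
  induction L with
  | nil => rfl
  | cons a L ih =>
    have h1 : height (a :: L) =
        max 0 (max a (((List.range L.length).map
          (fun k => a + (L.take (k+1)).sum)).foldr max 0)) := by
      simp [height, List.range_succ_eq_map, List.map_map, Function.comp_def]
    have h2 : height L =
        max 0 (((List.range L.length).map (fun k => (L.take (k+1)).sum)).foldr max 0) := by
      simp [height, List.range_succ_eq_map, List.map_map, Function.comp_def]
    have key := aux_max a ((List.range L.length).map (fun k => (L.take (k+1)).sum))
    simp only [List.map_map, Function.comp_def] at key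
    show height (a :: L) = max 0 (a + height2 L)
    rw [h1, key, ← h2, ih]

lemma height2_nonneg (L : List ℤ) : 0 ≤ height2 L := by
  cases L <;> simp [height2]

lemma height2_append (X Y : List ℤ) :
    height2 (X ++ Y) = max (height2 X) (cost X + height2 Y) := by
  induction X with
  | nil =>
    simp [height2, cost]
    have := height2_nonneg Y
    omega
  | cons a X ih =>
    have hc : cost (a :: X) = a + cost X := by simp [cost]
    simp only [List.cons_append, height2, List.append_eq, ih, hc]
    have := height2_nonneg Y
    have := height2_nonneg X
    omega

theorem exchange_lemma (S₁ A B S₂ : List ℤ) (h : StandardPair B A) :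
    height (S₁ ++ B ++ A ++ S₂) ≤ height (S₁ ++ A ++ B ++ S₂) := by
  have hc : ∀ X Y : List ℤ, cost (X ++ Y) = cost X + cost Y := by
    intro X Y; simp [cost]
  simp only [height_eq, List.append_assoc, height2_append, hc] at *
  unfold StandardPair fall at h
  simp only [height_eq] at h
  rcases h with ⟨h1, h2, h3⟩ | ⟨h1, h2, h3⟩ | ⟨h1, h2⟩ <;> omega
end

section
/- If B and A are sequences of integers with cost(B) < 0 ≤ cost(A), then for any sequences S₁, S₂, height(S₁ B A S₂) ≤ height(S₁ A B S₂). -/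
theorem List.foldr_max_le_iff {α : Type*} [LinearOrder α] {b c : α} {l : List α} :
    l.foldr max b ≤ c ↔ b ≤ c ∧ ∀ x ∈ l, x ≤ c := by
  induction l with
  | nil => simp
  | cons x l ih => simp [ih, and_left_comm]

theorem height_le_iff {L : List ℤ} {c : ℤ} :
    height L ≤ c ↔ 0 ≤ c ∧ ∀ k < L.length + 1, (L.take k).sum ≤ c := by
  simp [height, List.foldr_max_le_iff]

@[simp]
theorem height_nil : height [] = 0 := by
  simp [height]

theorem height_cons (a : ℤ) (l : List ℤ) : height (a :: l) = max 0 (a + height l) := by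
  refine eq_of_forall_ge_iff fun c => ?_
  simp only [height_le_iff, max_le_iff, ← le_sub_iff_add_le', List.length_cons,
    Nat.forall_lt_succ_left, List.take_zero, List.take_succ_cons, List.sum_nil, List.sum_cons,
    and_self_left]

theorem cost_append (X Y : List ℤ) : cost (X ++ Y) = cost X + cost Y :=
  List.sum_append

theorem height_append (X Y : List ℤ) :
    height (X ++ Y) = max (height X) (cost X + height Y) := by
  induction X with
  | nil => simp [cost, height_nonneg]
  | cons a X ih =>
    simp only [List.cons_append, height_cons, ih, cost, List.sum_cons, add_max, add_assoc,
      max_assoc]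

theorem height_append_le_append_left (S : List ℤ) {M N : List ℤ} (h : height M ≤ height N) :
    height (S ++ M) ≤ height (S ++ N) := by
  rw [height_append, height_append]
  gcongr

theorem height_append_le_append_right (S : List ℤ) {M N : List ℤ} (hh : height M ≤ height N)
    (hc : cost M ≤ cost N) : height (M ++ S) ≤ height (N ++ S) := by
  rw [height_append, height_append]
  gcongr

theorem height_append_swap_le {A B : List ℤ} (hB : cost B ≤ 0) (hA : 0 ≤ cost A) :
    height (B ++ A) ≤ height (A ++ B) := by
  rw [height_append, height_append]
  exact max_le (le_max_of_le_right (le_add_of_nonneg_left hA))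
    (le_max_of_le_left (add_le_of_nonpos_left hB))

theorem exchange_neg_nonneg (B A S₁ S₂ : List ℤ)
    (hB : cost B < 0) (hA : 0 ≤ cost A) :
    height (S₁ ++ B ++ A ++ S₂) ≤ height (S₁ ++ A ++ B ++ S₂) := by
  have hswap : height (B ++ A ++ S₂) ≤ height (A ++ B ++ S₂) :=
    height_append_le_append_right S₂ (height_append_swap_le hB.le hA)
      (by rw [cost_append, cost_append, add_comm])
  simpa only [List.append_assoc] using height_append_le_append_left S₁ hswap
end

section
/- Let G consist of p disjoint chains of nodes with costs ±1 (+1 for P-operations, −1 for V-operations), and let v, w be nodes in distinct chains C_i, C_j. Then there exists a valid subschedule of G in which v precedes w if and only if there exists a cut Γ of G with Γ(j) = w, Γ(i) succeeding or equal to v, such that G[Γ] has a j-schedule of height 0. -/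
variable {p : ℕ}

/-- Realize a word of chain indices as the sequence of node costs obtained by,
at each step, consuming the next unused node of the indicated chain. -/
def realize (C : Fin p → List ℤ) : List (Fin p) → List ℤ
  | [] => []
  | i :: w => (C i).headD 0 :: realize (Function.update C i (C i).tail) w

/-- A schedule of the chain graph `C`: a word using each chain exactly up to
its length (a linear extension, realized chainwise). -/
def IsSched (C : Fin p → List ℤ) (w : List (Fin p)) : Prop :=
  ∀ i, w.count i = (C i).length

/-- A subschedule: a prefix of some schedule. -/
def IsSub (C : Fin p → List ℤ) (w : List (Fin p)) : Prop :=
  ∀ i, w.count i ≤ (C i).length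

/-- positions in `u` at which chain `i` is scheduled. -/
def occIdx (u : List (Fin p)) (i : Fin p) : List ℕ :=
  (List.range u.length).filter fun t => decide (u[t]? = some i)

/-- In the word `u`, node number `a` (0-based) of chain `i` occurs before node
number `b` of chain `j`. -/
def Precedes (u : List (Fin p)) (i : Fin p) (a : ℕ) (j : Fin p) (b : ℕ) : Prop :=
  ∃ s t, (occIdx u i)[a]? = some s ∧ (occIdx u j)[b]? = some t ∧ s < t

/-- A subschedule is valid when, at every prefix, the number of `P` operations
(+1) does not exceed the number of `V` operations (−1). -/
def ValidWord (C : Fin p → List ℤ) (u : List (Fin p)) : Prop :=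
  ∀ t, ((realize C u).take t).sum ≤ 0

lemma occIdx_append (u v : List (Fin p)) (k : Fin p) :
    occIdx (u ++ v) k = occIdx u k ++ (occIdx v k).map (u.length + ·) := by
  unfold occIdx
  rw [List.length_append, List.range_add, List.filter_append, List.filter_map]
  congr 1
  · refine List.filter_congr fun t ht => ?_
    rw [List.getElem?_append_left (List.mem_range.mp ht)]
  · congr 1
    refine List.filter_congr fun t _ => ?_
    simp only [Function.comp, List.getElem?_append_right (Nat.le_add_right _ _),
      Nat.add_sub_cancel_left]

lemma occIdx_singleton (x k : Fin p) : occIdx [x] k = if x = k then [0] else [] := by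
  by_cases h : x = k <;> simp [occIdx, h, List.range_succ]

lemma length_occIdx (u : List (Fin p)) (k : Fin p) : (occIdx u k).length = u.count k := by
  induction u with
  | nil => simp [occIdx]
  | cons x u ih =>
    rw [← List.singleton_append, occIdx_append, List.length_append, List.length_map, ih,
      occIdx_singleton, List.count_append]
    by_cases h : x = k <;> simp [h, Nat.add_comm]

lemma getElem?_occIdx_eq_some_iff {u : List (Fin p)} {k : Fin p} {a s : ℕ} :
    (occIdx u k)[a]? = some s ↔ u[s]? = some k ∧ (u.take s).count k = a := by
  have of_spec : ∀ {a s}, u[s]? = some k → (u.take s).count k = a →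
      (occIdx u k)[a]? = some s := by
    intro a s hs hc
    have hlt : s < u.length := (List.getElem?_eq_some_iff.mp hs).1
    have hdrop : (u.drop s)[0]? = some k := by rwa [List.getElem?_drop, Nat.add_zero]
    obtain ⟨x, v, hxv⟩ : ∃ x v, u.drop s = x :: v :=
      List.exists_cons_of_ne_nil (by simp; omega)
    rw [hxv, List.getElem?_cons_zero, Option.some.injEq] at hdrop
    conv_lhs => rw [← List.take_append_drop s u, hxv, ← List.singleton_append]
    rw [occIdx_append, occIdx_append, occIdx_singleton, if_pos hdrop,
      List.getElem?_append_right (by rw [length_occIdx, hc]), length_occIdx, hc]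
    simp [hlt.le]
  refine ⟨fun h => ?_, fun ⟨hs, hc⟩ => of_spec hs hc⟩
  obtain ⟨ha, hget⟩ := List.getElem?_eq_some_iff.mp h
  have hs : u[s]? = some k := by
    have hmem : s ∈ occIdx u k := hget ▸ List.getElem_mem ha
    exact of_decide_eq_true (List.mem_filter.mp hmem).2
  refine ⟨hs, ?_⟩
  have hspec := of_spec hs rfl
  exact ((List.getElem?_inj ha (List.nodup_range.filter _)).mp (h.trans hspec.symm)).symm

lemma precedes_iff {u : List (Fin p)} {i j : Fin p} {a b : ℕ} :
    Precedes u i a j b ↔ ∃ s t, s < t ∧ u[s]? = some i ∧ (u.take s).count i = a ∧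
      u[t]? = some j ∧ (u.take t).count j = b := by
  simp only [Precedes, getElem?_occIdx_eq_some_iff]
  constructor
  · rintro ⟨s, t, ⟨hs, hcs⟩, ⟨ht, hct⟩, hst⟩
    exact ⟨s, t, hst, hs, hcs, ht, hct⟩
  · rintro ⟨s, t, hst, hs, hcs, ht, hct⟩
    exact ⟨s, t, ⟨hs, hcs⟩, ⟨ht, hct⟩, hst⟩

lemma exists_getElem?_eq_some_of_lt_count {u : List (Fin p)} {k : Fin p} {a : ℕ}
    (ha : a < u.count k) : ∃ s, u[s]? = some k ∧ (u.take s).count k = a := by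
  rw [← length_occIdx] at ha
  exact ⟨_, getElem?_occIdx_eq_some_iff.mp (List.getElem?_eq_getElem ha)⟩

lemma realize_take (C : Fin p → List ℤ) (u : List (Fin p)) (n : ℕ) :
    realize C (u.take n) = (realize C u).take n := by
  induction u generalizing C n with
  | nil => simp [realize]
  | cons x w ih => cases n <;> simp [realize, ih]

lemma realize_congr {C D : Fin p → List ℤ} {u : List (Fin p)}
    (h : ∀ k, (C k).take (u.count k) = (D k).take (u.count k)) :
    realize C u = realize D u := by
  induction u generalizing C D with
  | nil => rfl
  | cons x w ih =>
    have hx := h x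
    rw [List.count_cons_self] at hx
    simp only [realize]
    congr 1
    · cases hC : C x <;> cases hD : D x <;> simp_all
    · refine ih fun k => ?_
      by_cases hk : k = x
      · subst hk
        cases hC : C k <;> cases hD : D k <;> simp_all
      · rw [Function.update_of_ne hk, Function.update_of_ne hk]
        have := h k
        rwa [List.count_cons_of_ne (Ne.symm hk)] at this

lemma realize_take_count {C : Fin p → List ℤ} {Γ : Fin p → ℕ} {u : List (Fin p)}
    (h : ∀ k, u.count k ≤ Γ k) : realize (fun k => (C k).take (Γ k)) u = realize C u :=
  realize_congr fun k => by rw [List.take_take, min_eq_left (h k)]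

lemma height_eq_zero_iff (L : List ℤ) : height L = 0 ↔ ∀ t, (L.take t).sum ≤ 0 := by
  have foldr_max_le_zero_iff : ∀ l : List ℤ, l.foldr max 0 ≤ 0 ↔ ∀ x ∈ l, x ≤ 0 := by
    intro l
    induction l with
    | nil => simp
    | cons x l ih => simp [ih]
  have foldr_max_nonneg : ∀ l : List ℤ, 0 ≤ l.foldr max 0 := by
    intro l
    induction l with
    | nil => simp
    | cons x l ih => exact le_max_of_le_right ih
  rw [height, le_antisymm_iff, foldr_max_le_zero_iff]
  simp only [foldr_max_nonneg, and_true, List.mem_map, List.mem_range, forall_exists_index,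
    and_imp, forall_apply_eq_imp_iff₂]
  refine ⟨fun h t => ?_, fun h t _ => h t⟩
  rcases le_or_gt t L.length with ht | ht
  · exact h t (Nat.lt_succ_of_le ht)
  · simpa [List.take_of_length_le ht.le] using h L.length (Nat.lt_succ_self _)

lemma height_realize_take_eq_zero_iff {C : Fin p → List ℤ} {Γ : Fin p → ℕ}
    {u : List (Fin p)} (h : ∀ k, u.count k ≤ Γ k) :
    height (realize (fun k => (C k).take (Γ k)) u) = 0 ↔ ValidWord C u := by
  rw [realize_take_count h, height_eq_zero_iff, ValidWord]

lemma ValidWord.take {C : Fin p → List ℤ} {u : List (Fin p)} (hu : ValidWord C u)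
    (n : ℕ) : ValidWord C (u.take n) := fun t => by
  rw [realize_take, List.take_take]
  exact hu _

lemma exists_cut_of_precedes {C : Fin p → List ℤ} {u : List (Fin p)} {i j : Fin p}
    {a b : ℕ} (hsub : IsSub C u) (hval : ValidWord C u) (hp : Precedes u i a j b) :
    ∃ Γ : Fin p → ℕ, (∀ k, Γ k ≤ (C k).length) ∧ Γ j = b + 1 ∧ a + 1 ≤ Γ i ∧
      ∃ w, IsSched (fun k => (C k).take (Γ k)) w ∧ w.getLast? = some j ∧
        height (realize (fun k => (C k).take (Γ k)) w) = 0 := by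
  obtain ⟨s, t, hst, hs, hcs, ht, hct⟩ := precedes_iff.mp hp
  have hw : u.take (t + 1) = u.take t ++ [j] := by rw [List.take_add_one, ht]; rfl
  set w := u.take (t + 1)
  have hwC : ∀ k, w.count k ≤ (C k).length :=
    fun k => ((List.take_prefix _ u).count_le k).trans (hsub k)
  have hvw : u.take s ++ [i] <+: w := by
    rw [← Option.toList_some, ← hs, ← List.take_add_one]
    exact List.take_prefix_take_left (by omega)
  refine ⟨fun k => w.count k, hwC, ?_, ?_, w, fun k => ?_, ?_, ?_⟩
  · simp [hw, hct]
  · simpa [hcs] using hvw.count_le i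
  · simp [hwC k]
  · rw [hw]
    exact List.getLast?_concat
  · exact (height_realize_take_eq_zero_iff fun _ => le_rfl).mpr (hval.take _)

lemma precedes_of_getLast?_eq {u : List (Fin p)} {i j : Fin p} {a b : ℕ} (hij : i ≠ j)
    (hlast : u.getLast? = some j) (hj : u.count j = b + 1) (hi : a < u.count i) :
    Precedes u i a j b := by
  obtain ⟨v, rfl⟩ := List.getLast?_eq_some_iff.mp hlast
  have hiv : a < v.count i := by simpa [List.count_append, Ne.symm hij] using hi
  obtain ⟨s, hs, hcs⟩ := exists_getElem?_eq_some_of_lt_count hiv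
  have hsv : s < v.length := (List.getElem?_eq_some_iff.mp hs).1
  refine precedes_iff.mpr ⟨s, v.length, hsv, ?_, ?_, by simp, ?_⟩
  · rwa [List.getElem?_append_left hsv]
  · rwa [List.take_append_of_le_length hsv.le]
  · simpa [List.count_append] using hj

theorem race_iff_cut_general (C : Fin p → List ℤ)
    (i j : Fin p) (hij : i ≠ j) (a b : ℕ) :
    (∃ u, IsSub C u ∧ ValidWord C u ∧ Precedes u i a j b) ↔
      ∃ Γ : Fin p → ℕ, (∀ k, Γ k ≤ (C k).length) ∧
        Γ j = b + 1 ∧ a + 1 ≤ Γ i ∧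
        ∃ w, IsSched (fun k => (C k).take (Γ k)) w ∧ w.getLast? = some j ∧
          height (realize (fun k => (C k).take (Γ k)) w) = 0 := by
  constructor
  · rintro ⟨u, hsub, hval, hp⟩
    exact exists_cut_of_precedes hsub hval hp
  · rintro ⟨Γ, hΓ, hΓj, hΓi, w, hsched, hlast, hh⟩
    have hcount : ∀ k, w.count k = Γ k := fun k => by simpa [hΓ k] using hsched k
    refine ⟨w, fun k => (hcount k).trans_le (hΓ k),
      (height_realize_take_eq_zero_iff fun k => (hcount k).le).mp hh, ?_⟩
    exact precedes_of_getLast?_eq hij hlast (by rw [hcount, hΓj]) (by rw [hcount]; omega)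

/-- There is a valid subschedule in which `v` (node `a` of chain `i`) precedes
`w` (node `b` of chain `j`) iff some cut `Γ` with `Γ j = w` and `Γ i` weakly
succeeding `v` admits a `j`-terminal schedule of its prefix subgraph of
height `0`. -/
theorem race_iff_cut (C : Fin p → List ℤ)
    (hpm : ∀ k, ∀ x ∈ C k, x = 1 ∨ x = -1)
    (i j : Fin p) (hij : i ≠ j) (a b : ℕ)
    (ha : a < (C i).length) (hb : b < (C j).length) :
    (∃ u, IsSub C u ∧ ValidWord C u ∧ Precedes u i a j b) ↔
      ∃ Γ : Fin p → ℕ, (∀ k, Γ k ≤ (C k).length) ∧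
        Γ j = b + 1 ∧ a + 1 ≤ Γ i ∧
        ∃ w, IsSched (fun k => (C k).take (Γ k)) w ∧ w.getLast? = some j ∧
          height (realize (fun k => (C k).take (Γ k)) w) = 0 :=
  race_iff_cut_general C i j hij a b
end
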